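/- arXiv:1907.08876 — 5 statements merged into one kernel-verified Lean document; each statement's English description precedes it below -/
import Mathlib

section
/- Let H be a separable Hilbert space and {φ_n}_{n≥0} a sequence of unit vectors in H. Define ξ_0 = ⟨ξ, φ_0⟩φ_0 and ξ_n = ξ_{n−1} + ⟨ξ − ξ_{n−1}, φ_n⟩φ_n for n ≥ 1 (the Kaczmarz algorithm), and define γ_0 = φ_0 and γ_n = φ_n − Σ_{k=0}^{n−1} ⟨φ_n, φ_k⟩ γ_k. Then for every ξ ∈ H and every n ≥ 0, ξ_n = Σ_{k=0}^{n} ⟨ξ, γ_k⟩ φ_k. -/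
/-!
Expanding the recursion for `γ (n + 1)` by sesquilinearity gives
`⟨ξ, γ_{n+1}⟩ = ⟨ξ - Σ_{k ≤ n} ⟨ξ, γ_k⟩ φ_k, φ_{n+1}⟩`. Hence, once `ξ_n` has been identified with
the partial sum, the coefficient added by the next Kaczmarz step is exactly `⟨ξ, γ_{n+1}⟩`, and
the theorem follows by induction on `n`.
-/

open Finset

-- The paper's inner product `⟨a, b⟩` (linear in `a`) is `⟪b, a⟫` here.
local notation "⟪" x ", " y "⟫" => @inner ℂ _ _ x y

theorem inner_succ_eq_inner_sub_partial_sum {𝕜 E : Type*} [RCLike 𝕜] [SeminormedAddCommGroup E]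
    [InnerProductSpace 𝕜 E] (φ γ : ℕ → E) (n : ℕ)
    (hγ : γ (n + 1) = φ (n + 1) - ∑ k ∈ range (n + 1), inner 𝕜 (φ k) (φ (n + 1)) • γ k) (ξ : E) :
    inner 𝕜 (γ (n + 1)) ξ = inner 𝕜 (φ (n + 1)) (ξ - ∑ k ∈ range (n + 1), inner 𝕜 (γ k) ξ • φ k) := by
  rw [hγ, inner_sub_left, sum_inner, inner_sub_right, inner_sum]
  congr 1
  refine sum_congr rfl fun k _ => ?_
  rw [inner_smul_left, inner_smul_right, inner_conj_symm, mul_comm]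

theorem kaczmarz_partial_sums_general
    (H : Type*) [NormedAddCommGroup H] [InnerProductSpace ℂ H]
    (φ : ℕ → H)
    (x : H → ℕ → H)
    (hx0 : ∀ ξ : H, x ξ 0 = ⟪φ 0, ξ⟫ • φ 0)
    (hxs : ∀ ξ : H, ∀ n : ℕ,
      x ξ (n + 1) = x ξ n + ⟪φ (n + 1), ξ - x ξ n⟫ • φ (n + 1))
    (γ : ℕ → H)
    (hγ0 : γ 0 = φ 0)
    (hγs : ∀ n : ℕ,
      γ (n + 1) = φ (n + 1) - ∑ k ∈ Finset.range (n + 1), ⟪φ k, φ (n + 1)⟫ • γ k) :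
    ∀ (ξ : H) (n : ℕ), x ξ n = ∑ k ∈ Finset.range (n + 1), ⟪γ k, ξ⟫ • φ k := by
  intro ξ n
  induction n with
  | zero => simp [hx0, hγ0]
  | succ n ih =>
    rw [hxs, ih, sum_range_succ _ (n + 1), inner_succ_eq_inner_sub_partial_sum φ γ n (hγs n)]

/-- Kaczmarz iterates `ξ_n` satisfy `ξ_n = Σ_{k=0}^n ⟨ξ, γ_k⟩ φ_k`,
where the paper's inner product `⟨a,b⟩` (linear in the first argument) corresponds
to Mathlib's `⟪b, a⟫`. -/
theorem kaczmarz_partial_sums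
    (H : Type*) [NormedAddCommGroup H] [InnerProductSpace ℂ H]
    [CompleteSpace H] [TopologicalSpace.SeparableSpace H]
    (φ : ℕ → H) (hφ : ∀ n, ‖φ n‖ = 1)
    (x : H → ℕ → H)
    (hx0 : ∀ ξ : H, x ξ 0 = ⟪φ 0, ξ⟫ • φ 0)
    (hxs : ∀ ξ : H, ∀ n : ℕ,
      x ξ (n + 1) = x ξ n + ⟪φ (n + 1), ξ - x ξ n⟫ • φ (n + 1))
    (γ : ℕ → H)
    (hγ0 : γ 0 = φ 0)
    (hγs : ∀ n : ℕ,
      γ (n + 1) = φ (n + 1) - ∑ k ∈ Finset.range (n + 1), ⟪φ k, φ (n + 1)⟫ • γ k) :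
    ∀ (ξ : H) (n : ℕ), x ξ n = ∑ k ∈ Finset.range (n + 1), ⟪γ k, ξ⟫ • φ k :=
  kaczmarz_partial_sums_general H φ x hx0 hxs γ hγ0 hγs
end

section
/- Let H be a separable Hilbert space, {φ_n}_{n≥0} a complete sequence of unit vectors, and {γ_n}_{n≥0} defined by γ_0 = φ_0, γ_n = φ_n − Σ_{k=0}^{n−1} ⟨φ_n, φ_k⟩ γ_k. The sequence {φ_n} is effective (i.e. the Kaczmarz iterates ξ_n converge to ξ for every ξ ∈ H) if and only if {γ_n}_{n≥0} is a Parseval frame for H, i.e. Σ_{n≥0} |⟨ξ, γ_n⟩|² = ‖ξ‖² for all ξ ∈ H. -/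
/-!
Write `x_n` for the Kaczmarz iterates of `ξ`. By induction on `n`, `x_n = Σ_{k ≤ n} ⟨ξ, γ_k⟩ φ_k`,
and the Gram–Schmidt-like recursion for `γ` is exactly what makes the step coefficient
`⟨ξ - x_n, φ_{n+1}⟩` equal to `⟨ξ, γ_{n+1}⟩`. Each step subtracts from `ξ - x_n` its component
along a unit vector, so by Pythagoras `‖ξ - x_n‖² = ‖ξ‖² - Σ_{k ≤ n} |⟨ξ, γ_k⟩|²`, and `x_n → ξ`
says precisely that these partial sums tend to `‖ξ‖²`.
(The paper's `⟨a, b⟩`, linear in `a`, is Mathlib's `⟪b, a⟫`.)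
-/

open Filter Finset
open scoped Topology InnerProductSpace

local notation "⟪" x ", " y "⟫" => @inner ℂ _ _ x y

theorem tendsto_sq_nhds_zero_iff {α : Type*} {l : Filter α} {f : α → ℝ} (hf : ∀ a, 0 ≤ f a) :
    Tendsto (fun a => f a ^ 2) l (𝓝 0) ↔ Tendsto f l (𝓝 0) := by
  refine ⟨fun h => ?_, fun h => by simpa using h.pow 2⟩
  simpa [Real.sqrt_sq (hf _)] using h.sqrt

theorem tendsto_iff_hasSum_of_norm_sub_sq {E : Type*} [SeminormedAddCommGroup E] {ξ : E}
    {y : ℕ → E} {a : ℕ → ℝ} {c : ℝ} (ha : ∀ n, 0 ≤ a n)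
    (h : ∀ n, ‖ξ - y n‖ ^ 2 = c - ∑ k ∈ range (n + 1), a k) :
    Tendsto y atTop (𝓝 ξ) ↔ HasSum a c := by
  have hsum : ∀ n, ∑ k ∈ range (n + 1), a k = c - ‖y n - ξ‖ ^ 2 := fun n => by
    rw [norm_sub_rev, h]; ring
  rw [hasSum_iff_tendsto_nat_of_nonneg ha,
    ← tendsto_add_atTop_iff_nat (f := fun n => ∑ k ∈ range n, a k) 1, funext hsum,
    ← tendsto_const_sub_iff c, sub_self]
  simp only [sub_sub_cancel]
  rw [tendsto_sq_nhds_zero_iff fun _ => norm_nonneg _, tendsto_iff_norm_sub_tendsto_zero]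

section Kaczmarz

variable {𝕜 H : Type*} [RCLike 𝕜] [NormedAddCommGroup H] [InnerProductSpace 𝕜 H]

theorem norm_sub_inner_smul_sq_of_norm_eq_one {u : H} (hu : ‖u‖ = 1) (v : H) :
    ‖v - ⟪u, v⟫_𝕜 • u‖ ^ 2 = ‖v‖ ^ 2 - ‖⟪u, v⟫_𝕜‖ ^ 2 := by
  rw [@norm_sub_sq 𝕜, inner_smul_right, ← inner_conj_symm v u, RCLike.mul_conj, norm_smul, hu,
    mul_one, ← RCLike.ofReal_pow, RCLike.ofReal_re]
  ring

variable {φ γ : ℕ → H} {x : H → ℕ → H}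

theorem inner_sub_sum_inner_smul_eq_inner
    (hγs : ∀ n, γ (n + 1) = φ (n + 1) - ∑ k ∈ range (n + 1), ⟪φ k, φ (n + 1)⟫_𝕜 • γ k)
    (ξ : H) (n : ℕ) :
    ⟪φ (n + 1), ξ - ∑ k ∈ range (n + 1), ⟪γ k, ξ⟫_𝕜 • φ k⟫_𝕜 = ⟪γ (n + 1), ξ⟫_𝕜 := by
  rw [hγs n]
  simp only [inner_sub_left, inner_sub_right, inner_sum, sum_inner, inner_smul_left,
    inner_smul_right, inner_conj_symm]
  exact congrArg _ (sum_congr rfl fun k _ => mul_comm _ _)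

theorem kaczmarz_eq_sum_inner_smul
    (hx0 : ∀ ξ, x ξ 0 = ⟪φ 0, ξ⟫_𝕜 • φ 0)
    (hxs : ∀ ξ n, x ξ (n + 1) = x ξ n + ⟪φ (n + 1), ξ - x ξ n⟫_𝕜 • φ (n + 1))
    (hγ0 : γ 0 = φ 0)
    (hγs : ∀ n, γ (n + 1) = φ (n + 1) - ∑ k ∈ range (n + 1), ⟪φ k, φ (n + 1)⟫_𝕜 • γ k)
    (ξ : H) (n : ℕ) :
    x ξ n = ∑ k ∈ range (n + 1), ⟪γ k, ξ⟫_𝕜 • φ k := by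
  induction n with
  | zero => simp [hx0, hγ0]
  | succ n ih =>
    rw [hxs, ih, inner_sub_sum_inner_smul_eq_inner hγs, sum_range_succ _ (n + 1)]

theorem norm_sub_kaczmarz_sq (hφ : ∀ n, ‖φ n‖ = 1)
    (hx0 : ∀ ξ, x ξ 0 = ⟪φ 0, ξ⟫_𝕜 • φ 0)
    (hxs : ∀ ξ n, x ξ (n + 1) = x ξ n + ⟪φ (n + 1), ξ - x ξ n⟫_𝕜 • φ (n + 1))
    (hγ0 : γ 0 = φ 0)
    (hγs : ∀ n, γ (n + 1) = φ (n + 1) - ∑ k ∈ range (n + 1), ⟪φ k, φ (n + 1)⟫_𝕜 • γ k)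
    (ξ : H) (n : ℕ) :
    ‖ξ - x ξ n‖ ^ 2 = ‖ξ‖ ^ 2 - ∑ k ∈ range (n + 1), ‖⟪γ k, ξ⟫_𝕜‖ ^ 2 := by
  induction n with
  | zero => simp [hx0, hγ0, norm_sub_inner_smul_sq_of_norm_eq_one (hφ 0)]
  | succ n ih =>
    have hstep : ξ - x ξ (n + 1) = (ξ - x ξ n) - ⟪φ (n + 1), ξ - x ξ n⟫_𝕜 • φ (n + 1) := by
      rw [hxs]; abel
    rw [hstep, norm_sub_inner_smul_sq_of_norm_eq_one (hφ (n + 1)), ih,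
      kaczmarz_eq_sum_inner_smul hx0 hxs hγ0 hγs, inner_sub_sum_inner_smul_eq_inner hγs,
      sum_range_succ _ (n + 1)]
    ring

end Kaczmarz

theorem effective_iff_parseval_frame_general
    (H : Type*) [NormedAddCommGroup H] [InnerProductSpace ℂ H]
    (φ : ℕ → H) (hφ : ∀ n, ‖φ n‖ = 1)
    (x : H → ℕ → H)
    (hx0 : ∀ ξ : H, x ξ 0 = ⟪φ 0, ξ⟫ • φ 0)
    (hxs : ∀ ξ : H, ∀ n : ℕ,
      x ξ (n + 1) = x ξ n + ⟪φ (n + 1), ξ - x ξ n⟫ • φ (n + 1))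
    (γ : ℕ → H)
    (hγ0 : γ 0 = φ 0)
    (hγs : ∀ n : ℕ,
      γ (n + 1) = φ (n + 1) - ∑ k ∈ Finset.range (n + 1), ⟪φ k, φ (n + 1)⟫ • γ k) :
    (∀ ξ : H, Tendsto (fun n => x ξ n) atTop (𝓝 ξ)) ↔
      (∀ ξ : H, HasSum (fun n => ‖⟪γ n, ξ⟫‖ ^ 2) (‖ξ‖ ^ 2)) :=
  forall_congr' fun ξ => tendsto_iff_hasSum_of_norm_sub_sq (fun _ => by positivity)
    (norm_sub_kaczmarz_sq hφ hx0 hxs hγ0 hγs ξ)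

/-- a complete sequence of unit vectors is effective (Kaczmarz
iterates converge to the vector, for every vector) iff the auxiliary sequence
`γ_n` is a Parseval frame.  The paper's inner product `⟨a,b⟩` (linear in the
first argument) corresponds to Mathlib's `⟪b, a⟫`. -/
theorem effective_iff_parseval_frame
    (H : Type*) [NormedAddCommGroup H] [InnerProductSpace ℂ H]
    [CompleteSpace H] [TopologicalSpace.SeparableSpace H]
    (φ : ℕ → H) (hφ : ∀ n, ‖φ n‖ = 1)
    (hcomplete : (Submodule.span ℂ (Set.range φ)).topologicalClosure = ⊤)
    (x : H → ℕ → H)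
    (hx0 : ∀ ξ : H, x ξ 0 = ⟪φ 0, ξ⟫ • φ 0)
    (hxs : ∀ ξ : H, ∀ n : ℕ,
      x ξ (n + 1) = x ξ n + ⟪φ (n + 1), ξ - x ξ n⟫ • φ (n + 1))
    (γ : ℕ → H)
    (hγ0 : γ 0 = φ 0)
    (hγs : ∀ n : ℕ,
      γ (n + 1) = φ (n + 1) - ∑ k ∈ Finset.range (n + 1), ⟪φ k, φ (n + 1)⟫ • γ k) :
    (∀ ξ : H, Tendsto (fun n => x ξ n) atTop (𝓝 ξ)) ↔
      (∀ ξ : H, HasSum (fun n => ‖⟪γ n, ξ⟫‖ ^ 2) (‖ξ‖ ^ 2)) :=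
  effective_iff_parseval_frame_general H φ hφ x hx0 hxs γ hγ0 hγs
end

section
/- Let φ and ϑ be holomorphic self-maps of the disc and suppose two families of positive measures {μ_β^φ}_{β∈T} and {μ_α^ϑ}_{α∈T} satisfy the Clark identities ∫_T P_z dμ_β^φ = (1−|φ(z)|²)/|β−φ(z)|² and ∫_T P_z dμ_α^ϑ = (1−|ϑ(z)|²)/|α−ϑ(z)|². Then for all z ∈ D and α ∈ T, (1 − |ϑ(φ(z))|²)/|α − ϑ(φ(z))|² = ∫_T ∫_T P_z(ζ) dμ_β^φ(ζ) dμ_α^ϑ(β). -/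
open Complex MeasureTheory Metric Set
open scoped ComplexConjugate

/-- if two families of positive measures on the unit circle
satisfy the Clark identities for holomorphic self-maps `φ, ϑ` of the disc, then
the Poisson integral of the composition satisfies
`(1-|ϑ(φ(z))|²)/|α-ϑ(φ(z))|² = ∫∫ P_z dμ_β^φ dμ_α^ϑ(β)`. -/
theorem poisson_of_composition
    (φ ϑ : ℂ → ℂ)
    (hφ : DifferentiableOn ℂ φ (ball (0:ℂ) 1))
    (hφmap : MapsTo φ (ball (0:ℂ) 1) (ball (0:ℂ) 1))
    (hϑ : DifferentiableOn ℂ ϑ (ball (0:ℂ) 1))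
    (hϑmap : MapsTo ϑ (ball (0:ℂ) 1) (ball (0:ℂ) 1))
    (μφ : ℂ → Measure ℂ)
    (hμφfin : ∀ β ∈ sphere (0:ℂ) 1, IsFiniteMeasure (μφ β))
    (hμφsupp : ∀ β ∈ sphere (0:ℂ) 1, (μφ β) (sphere (0:ℂ) 1)ᶜ = 0)
    (hμφ : ∀ β ∈ sphere (0:ℂ) 1, ∀ z ∈ ball (0:ℂ) 1,
      (∫ ζ, (1 - ‖z‖ ^ 2) / ‖ζ - z‖ ^ 2 ∂μφ β) = (1 - ‖φ z‖ ^ 2) / ‖β - φ z‖ ^ 2)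
    (μϑ : ℂ → Measure ℂ)
    (hμϑfin : ∀ α ∈ sphere (0:ℂ) 1, IsFiniteMeasure (μϑ α))
    (hμϑsupp : ∀ α ∈ sphere (0:ℂ) 1, (μϑ α) (sphere (0:ℂ) 1)ᶜ = 0)
    (hμϑ : ∀ α ∈ sphere (0:ℂ) 1, ∀ z ∈ ball (0:ℂ) 1,
      (∫ ζ, (1 - ‖z‖ ^ 2) / ‖ζ - z‖ ^ 2 ∂μϑ α) = (1 - ‖ϑ z‖ ^ 2) / ‖α - ϑ z‖ ^ 2) :
    ∀ z ∈ ball (0:ℂ) 1, ∀ α ∈ sphere (0:ℂ) 1,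
      (1 - ‖ϑ (φ z)‖ ^ 2) / ‖α - ϑ (φ z)‖ ^ 2 =
        ∫ β, (∫ ζ, (1 - ‖z‖ ^ 2) / ‖ζ - z‖ ^ 2 ∂μφ β) ∂μϑ α := by
  intro z hz α hα
  have hsph : ∀ᵐ β ∂(μϑ α), β ∈ sphere (0:ℂ) 1 := by
    rw [MeasureTheory.ae_iff]
    have := hμϑsupp α hα
    convert this using 2
    rfl
  have hcongr : (∫ β, (∫ ζ, (1 - ‖z‖ ^ 2) / ‖ζ - z‖ ^ 2 ∂μφ β) ∂μϑ α) =
      ∫ β, (1 - ‖φ z‖ ^ 2) / ‖β - φ z‖ ^ 2 ∂μϑ α := by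
    refine MeasureTheory.integral_congr_ae ?_
    filter_upwards [hsph] with β hβ
    exact hμφ β hβ z hz
  rw [hcongr, hμϑ α hα (φ z) (hφmap hz)]
end

section
/- Let φ be an inner function with Clark measure μ_α for α ∈ T, and assume φ(0) = 0. Then the Cauchy transform of μ_α satisfies (K μ_α)(z) = ∫_T 1/(1 − z·conj(ζ)) dμ_α(ζ) = 1/(1 − conj(α) φ(z)) for all z in the open unit disc. -/
open Complex MeasureTheory Metric Set Filter
open scoped Topology ComplexConjugate Real

/-- Normalized Lebesgue (Haar) measure on the unit circle, realized as a
measure on `ℂ`. -/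
noncomputable def circleHaar : Measure ℂ :=
  (ENNReal.ofReal (2 * π)⁻¹) •
    Measure.map (fun t : ℝ => Complex.exp (t * Complex.I))
      (volume.restrict (Ioc (0:ℝ) (2 * π)))

/-- An inner function: a bounded holomorphic self-map of the open unit disc
whose radial boundary values have modulus `1` Lebesgue-a.e. on the circle. -/
def IsInner (φ : ℂ → ℂ) : Prop :=
  DifferentiableOn ℂ φ (ball (0:ℂ) 1) ∧
  MapsTo φ (ball (0:ℂ) 1) (ball (0:ℂ) 1) ∧
  ∀ᵐ ω ∂circleHaar, Tendsto (fun r : ℝ => ‖φ (r • ω)‖) (𝓝[<] 1) (𝓝 1)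

lemma kernel_re (w : ℂ) (hw : ‖w‖ < 1) :
    (1 - ‖w‖ ^ 2) / ‖1 - w‖ ^ 2 = 2 * ((1 - w)⁻¹).re - 1 := by
  have hne : (1 : ℂ) - w ≠ 0 := by
    intro h
    have : (1:ℂ) = w := by linear_combination h
    simp [← this] at hw
  have hns : normSq (1 - w) ≠ 0 := by simpa [Complex.normSq_eq_zero] using hne
  rw [Complex.inv_re]
  have h1 : ‖(1:ℂ) - w‖ ^ 2 = normSq (1 - w) := by
    rw [Complex.sq_norm]
  have h2 : ‖w‖ ^ 2 = normSq w := by rw [Complex.sq_norm]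
  rw [h1, h2]
  have e1 : normSq (1 - w) = 1 - 2 * w.re + normSq w := by
    simp [normSq_apply]; ring
  field_simp
  rw [e1]
  simp [normSq_apply]
  ring

lemma norm_one_sub_mul_conj (z ζ : ℂ) (hζ : ‖ζ‖ = 1) :
    ‖(1 : ℂ) - z * conj ζ‖ = ‖ζ - z‖ := by
  have h : (1 : ℂ) - z * conj ζ = conj ζ * (ζ - z) := by
    have hn : normSq ζ = 1 := by
      rw [← Complex.sq_norm, hζ]; norm_num
    have : conj ζ * ζ = 1 := by
      rw [← Complex.normSq_eq_conj_mul_self, hn]; norm_num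
    rw [mul_sub, this]; ring
  rw [h, norm_mul, RCLike.norm_conj, hζ, one_mul]

lemma kernel_re' (z ζ : ℂ) (hz : ‖z‖ < 1) (hζ : ‖ζ‖ = 1) :
    (1 - ‖z‖ ^ 2) / ‖ζ - z‖ ^ 2 = 2 * (((1:ℂ) - z * conj ζ)⁻¹).re - 1 := by
  have hwn : ‖z * conj ζ‖ = ‖z‖ := by rw [norm_mul, RCLike.norm_conj, hζ, mul_one]
  have hw : ‖z * conj ζ‖ < 1 := by rw [hwn]; exact hz
  have h := kernel_re (z * conj ζ) hw
  rw [norm_one_sub_mul_conj z ζ hζ, hwn] at h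
  exact h

lemma norm_one_sub_ge (z ζ : ℂ) (hζ : ‖ζ‖ = 1) :
    1 - ‖z‖ ≤ ‖(1:ℂ) - z * conj ζ‖ := by
  have := norm_sub_norm_le (1:ℂ) (z * conj ζ)
  simpa [norm_mul, RCLike.norm_conj, hζ] using this

lemma integ_aux (μ : Measure ℂ) [IsFiniteMeasure μ] (hae : ∀ᵐ ζ ∂μ, ‖ζ‖ = 1)
    (z : ℂ) (hz : ‖z‖ < 1) :
    Integrable (fun ζ => ((1:ℂ) - z * conj ζ)⁻¹) μ := by
  have hm : AEStronglyMeasurable (fun ζ => ((1:ℂ) - z * conj ζ)⁻¹) μ := by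
    apply Measurable.aestronglyMeasurable
    exact (measurable_const.sub (Complex.continuous_conj.measurable.const_mul z)).inv
  apply Integrable.mono' (integrable_const ((1 - ‖z‖)⁻¹)) hm
  filter_upwards [hae] with ζ hζ
  rw [norm_inv]
  have h1 := norm_one_sub_ge z ζ hζ
  gcongr

lemma one_sub_ne (z ζ : ℂ) (hz : ‖z‖ < 1) (hζ : ‖ζ‖ = 1) :
    (1:ℂ) - z * conj ζ ≠ 0 := by
  have h := norm_one_sub_ge z ζ hζ
  intro h0
  rw [h0, norm_zero] at h
  linarith

lemma F_diff (μ : Measure ℂ) [IsFiniteMeasure μ] (hae : ∀ᵐ ζ ∂μ, ‖ζ‖ = 1)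
    (z₀ : ℂ) (hz₀ : ‖z₀‖ < 1) :
    DifferentiableAt ℂ (fun z => ∫ ζ, ((1:ℂ) - z * conj ζ)⁻¹ ∂μ) z₀ := by
  set ε := (1 - ‖z₀‖) / 2 with hεdef
  have hεpos : 0 < ε := by rw [hεdef]; linarith
  have hmeas : ∀ z : ℂ, AEStronglyMeasurable (fun ζ => ((1:ℂ) - z * conj ζ)⁻¹) μ := by
    intro z
    exact ((measurable_const.sub (Complex.continuous_conj.measurable.const_mul z)).inv).aestronglyMeasurable
  have hz : ∀ z ∈ ball z₀ ε, ‖z‖ < 1 ∧ ε ≤ 1 - ‖z‖ := by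
    intro z hzb
    rw [mem_ball, dist_eq_norm] at hzb
    have h1 : ‖z‖ ≤ ‖z - z₀‖ + ‖z₀‖ := by
      simpa using norm_add_le (z - z₀) z₀
    constructor <;> [skip; skip] <;> rw [hεdef] at * <;> linarith
  have key := hasDerivAt_integral_of_dominated_loc_of_deriv_le (μ := μ)
    (F := fun z ζ => ((1:ℂ) - z * conj ζ)⁻¹)
    (F' := fun z ζ => conj ζ * ((((1:ℂ) - z * conj ζ)) ^ 2)⁻¹)
    (x₀ := z₀) (bound := fun _ => (ε ^ 2)⁻¹) (ball_mem_nhds z₀ hεpos)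
    (Eventually.of_forall fun z => hmeas z)
    (integ_aux μ hae z₀ hz₀)
    ?_ ?_ (integrable_const _) ?_
  · exact key.2.differentiableAt
  · exact ((Complex.continuous_conj.measurable.mul
      (((measurable_const.sub (Complex.continuous_conj.measurable.const_mul z₀)).pow_const 2).inv))).aestronglyMeasurable
  · filter_upwards [hae] with ζ hζ
    intro z hzb
    obtain ⟨hz1, hz2⟩ := hz z hzb
    have hnn := norm_one_sub_ge z ζ hζ
    rw [norm_mul, RCLike.norm_conj, hζ, one_mul, norm_inv, norm_pow]
    have hε2 : (0:ℝ) < ε ^ 2 := by positivity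
    gcongr
    · linarith
  · filter_upwards [hae] with ζ hζ
    intro z hzb
    obtain ⟨hz1, hz2⟩ := hz z hzb
    have hne := one_sub_ne z ζ hz1 hζ
    have hu : HasDerivAt (fun z : ℂ => (1:ℂ) - z * conj ζ) (-(conj ζ)) z := by
      simpa using (hasDerivAt_mul_const (conj ζ)).const_sub (1:ℂ)
    have := hu.inv hne
    rw [div_eq_mul_inv, neg_neg] at this
    exact this


/-- if `φ` is inner with `φ(0) = 0` and `μ_α` is its Clark
measure at `α ∈ 𝕋`, then the Cauchy transform of `μ_α` is
`K(μ_α)(z) = 1/(1 - conj(α) φ(z))` on the open unit disc. -/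
theorem cauchy_transform_of_clark_measure
    (φ : ℂ → ℂ) (hφ : IsInner φ) (hφ0 : φ 0 = 0)
    (α : ℂ) (hα : α ∈ sphere (0:ℂ) 1)
    (μα : Measure ℂ) [IsFiniteMeasure μα] (hsupp : μα (sphere (0:ℂ) 1)ᶜ = 0)
    (hclark : ∀ z ∈ ball (0:ℂ) 1,
      (∫ ζ, (1 - ‖z‖ ^ 2) / ‖ζ - z‖ ^ 2 ∂μα) = (1 - ‖φ z‖ ^ 2) / ‖α - φ z‖ ^ 2) :
    ∀ z ∈ ball (0:ℂ) 1,
      (∫ ζ, (1 - z * conj ζ)⁻¹ ∂μα) = (1 - conj α * φ z)⁻¹ := by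
  obtain ⟨hφd, hφm, -⟩ := hφ
  have hα1 : ‖α‖ = 1 := by rwa [mem_sphere_zero_iff_norm] at hα
  have hae : ∀ᵐ ζ ∂μα, ‖ζ‖ = 1 := by
    have h1 : ∀ᵐ ζ ∂μα, ζ ∈ sphere (0:ℂ) 1 := by
      rw [ae_iff]
      exact hsupp
    filter_upwards [h1] with ζ h using by rwa [mem_sphere_zero_iff_norm] at h
  have h0 : (0:ℂ) ∈ ball (0:ℂ) 1 := by simp
  have hφz : ∀ z ∈ ball (0:ℂ) 1, ‖φ z‖ < 1 := by
    intro z hz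
    have := hφm hz
    rwa [mem_ball, dist_zero_right] at this
  -- total mass is 1
  have hmass : (μα univ).toReal = 1 := by
    have hc := hclark 0 h0
    have hL : (∫ ζ, (1 - ‖(0:ℂ)‖ ^ 2) / ‖ζ - (0:ℂ)‖ ^ 2 ∂μα) = ∫ _ζ, (1:ℝ) ∂μα := by
      apply integral_congr_ae
      filter_upwards [hae] with ζ hζ
      simp [hζ]
    rw [hL, hφ0] at hc
    rw [integral_const] at hc
    simpa [hα1, Measure.real] using hc
  set F : ℂ → ℂ := fun z => ∫ ζ, ((1:ℂ) - z * conj ζ)⁻¹ ∂μα with hF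
  set g : ℂ → ℂ := fun z => ((1:ℂ) - conj α * φ z)⁻¹ with hg
  -- equal real parts
  have hre : ∀ z ∈ ball (0:ℂ) 1, (F z).re = (g z).re := by
    intro z hz
    have hz1 : ‖z‖ < 1 := by rwa [mem_ball, dist_zero_right] at hz
    have hint := integ_aux μα hae z hz1
    have h1 : (∫ ζ, (1 - ‖z‖ ^ 2) / ‖ζ - z‖ ^ 2 ∂μα) = 2 * (F z).re - 1 := by
      have e : (∫ ζ, (1 - ‖z‖ ^ 2) / ‖ζ - z‖ ^ 2 ∂μα)
          = ∫ ζ, (2 * (((1:ℂ) - z * conj ζ)⁻¹).re - 1) ∂μα := by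
        apply integral_congr_ae
        filter_upwards [hae] with ζ hζ using kernel_re' z ζ hz1 hζ
      have hre_int : Integrable (fun ζ => (((1:ℂ) - z * conj ζ)⁻¹).re) μα := by
        simpa using hint.re
      rw [e, integral_sub ((hre_int.const_mul 2)) (integrable_const 1),
        integral_const_mul, integral_const, (show μα.real univ = 1 from hmass)]
      have : (∫ ζ, (((1:ℂ) - z * conj ζ)⁻¹).re ∂μα) = (F z).re := by
        simpa using integral_re (𝕜 := ℂ) hint
      rw [this]
      simp
    have h2 := kernel_re' (φ z) α (hφz z hz) hα1
    rw [mul_comm (φ z) (conj α)] at h2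
    have h3 := hclark z hz
    rw [h1, h2] at h3
    have h4 : (F z).re = (g z).re := by
      rw [hF, hg]
      dsimp only
      linarith
    exact h4
  -- both are differentiable on the ball
  have hFd : DifferentiableOn ℂ F (ball (0:ℂ) 1) := by
    intro z hz
    exact (F_diff μα hae z (by rwa [mem_ball, dist_zero_right] at hz)).differentiableWithinAt
  have hgd : DifferentiableOn ℂ g (ball (0:ℂ) 1) := by
    apply DifferentiableOn.inv
    · exact (differentiableOn_const 1).sub ((differentiableOn_const (conj α)).mul hφd)
    · intro z hz
      have := one_sub_ne (φ z) α (hφz z hz) hα1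
      rwa [mul_comm (φ z) (conj α)] at this
  -- values at 0
  have hF0 : F 0 = 1 := by
    rw [hF]
    dsimp only
    have : (∫ ζ, ((1:ℂ) - 0 * conj ζ)⁻¹ ∂μα) = ∫ _ζ, (1:ℂ) ∂μα := by
      apply integral_congr_ae
      filter_upwards with ζ
      simp
    rw [this, integral_const, (show μα.real univ = 1 from hmass)]
    simp
  have hg0 : g 0 = 1 := by simp [hg, hφ0]
  -- consider h = F - g
  have hh : AnalyticOnNhd ℂ (fun z => F z - g z) (ball (0:ℂ) 1) :=
    (hFd.sub hgd).analyticOnNhd isOpen_ball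
  rcases hh.is_constant_or_isOpen (convex_ball (0:ℂ) 1).isPreconnected with ⟨w, hw⟩ | hopen
  · have hw0 : w = 0 := by
      have := hw 0 h0
      rw [hF0, hg0] at this
      simpa using this.symm
    intro z hz
    have := hw z hz
    rw [hw0, sub_eq_zero] at this
    exact this
  · exfalso
    have hO : IsOpen ((fun z => F z - g z) '' ball (0:ℂ) 1) :=
      hopen _ subset_rfl isOpen_ball
    have h0mem : (0:ℂ) ∈ (fun z => F z - g z) '' ball (0:ℂ) 1 := by
      refine ⟨0, h0, ?_⟩
      show F 0 - g 0 = 0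
      rw [hF0, hg0, sub_self]
    obtain ⟨r, hr, hball⟩ := Metric.isOpen_iff.1 hO 0 h0mem
    have hp : ((r/2 : ℝ) : ℂ) ∈ ball (0:ℂ) r := by
      rw [mem_ball, dist_zero_right]
      rw [Complex.norm_real]
      rw [Real.norm_eq_abs, abs_of_pos (by linarith)]
      linarith
    obtain ⟨z, hz, hzeq⟩ := hball hp
    have : (((r/2 : ℝ) : ℂ)).re = 0 := by
      rw [← hzeq, Complex.sub_re]
      rw [hre z hz]
      ring
    simp at this
    linarith
end

section
/- Let φ be an inner function with Toeplitz-type coefficients u_n determined by the power series φ(z) = Σ_{n=1}^∞ (−conj(u_n)) z^n, and let P_φ be the orthogonal projection of H² onto the model space H(φ) = H² ⊖ φH². Then for every n ≥ 0 and every w in the open unit disc, (P_φ z^n)(w) = w^n + φ(w) Σ_{k=0}^{n−1} u_{n−k} w^k. -/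
open Complex MeasureTheory Metric Set Filter
open scoped Topology ComplexConjugate Real

namespace ProjAux

lemma measurable_exp_mul_I : Measurable fun t : ℝ => Complex.exp (t * Complex.I) :=
  (Complex.continuous_ofReal.mul continuous_const).cexp.measurable

lemma ae_norm_one : ∀ᵐ ζ ∂circleHaar, ‖ζ‖ = 1 := by
  show ∀ᵐ ζ ∂((ENNReal.ofReal (2 * π)⁻¹) • Measure.map (fun t : ℝ => Complex.exp (t * Complex.I)) (volume.restrict (Ioc (0:ℝ) (2 * π)))), ‖ζ‖ = 1
  refine Measure.ae_smul_measure ?_ _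
  rw [MeasureTheory.ae_map_iff measurable_exp_mul_I.aemeasurable
    (show MeasurableSet {ζ : ℂ | ‖ζ‖ = 1} from measurable_norm (measurableSet_singleton (1:ℝ)))]
  exact ae_of_all _ fun t => by
    simp [Complex.norm_exp_ofReal_mul_I]

instance : IsProbabilityMeasure circleHaar := by
  constructor
  have h2π : (0:ℝ) < 2 * π := by positivity
  show ((ENNReal.ofReal (2 * π)⁻¹) • Measure.map _ _) univ = 1
  rw [Measure.smul_apply, Measure.map_apply measurable_exp_mul_I MeasurableSet.univ,
      Set.preimage_univ, Measure.restrict_apply_univ, Real.volume_Ioc, sub_zero, smul_eq_mul,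
      ← ENNReal.ofReal_mul (le_of_lt (inv_pos.2 h2π)), inv_mul_cancel₀ h2π.ne', ENNReal.ofReal_one]

lemma measurable_zpowC (m : ℤ) : Measurable fun z : ℂ => z ^ m := by
  cases m with
  | ofNat k => simpa using measurable_id.pow_const k
  | negSucc k =>
    have h : Measurable fun z : ℂ => (z ^ (k+1))⁻¹ := (measurable_id.pow_const (k+1)).inv
    simpa [zpow_negSucc] using h

lemma integrable_bdd {f : ℂ → ℂ} (hf : AEStronglyMeasurable f circleHaar)
    {C : ℝ} (hC : ∀ᵐ ζ ∂circleHaar, ‖f ζ‖ ≤ C) : Integrable f circleHaar :=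
  Integrable.mono' (integrable_const C) hf hC

lemma integral_zpow (m : ℤ) :
    ∫ ζ, ζ ^ m ∂circleHaar = if m = 0 then 1 else 0 := by
  rcases eq_or_ne m 0 with rfl | hm
  · simp
  rw [if_neg hm]
  show ∫ ζ, ζ ^ m ∂((ENNReal.ofReal (2 * π)⁻¹) • Measure.map _ _) = 0
  rw [integral_smul_measure,
      integral_map measurable_exp_mul_I.aemeasurable
        (measurable_zpowC m).aestronglyMeasurable]
  have h1 : ∀ t : ℝ, Complex.exp (↑t * Complex.I) ^ m
      = Complex.exp (((m : ℂ) * Complex.I) * t) := by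
    intro t; rw [← Complex.exp_int_mul]; ring_nf
  simp only [h1]
  have hle : (0:ℝ) ≤ 2 * π := by positivity
  rw [← intervalIntegral.integral_of_le hle,
    integral_exp_mul_complex (by simp [Complex.I_ne_zero, hm] : (m:ℂ) * Complex.I ≠ 0)]
  have : Complex.exp ((m : ℂ) * Complex.I * (2 * π : ℝ)) = 1 := by
    rw [show ((m : ℂ) * Complex.I * (2 * π : ℝ)) = (m : ℤ) * (2 * π * Complex.I) by
      push_cast; ring]
    exact Complex.exp_int_mul_two_pi_mul_I m
  rw [this]
  simp

end ProjAux


namespace ProjAux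

lemma conj_eq_inv {ζ : ℂ} (h : ‖ζ‖ = 1) : (starRingEnd ℂ) ζ = ζ⁻¹ := by
  have hζ : ζ ≠ 0 := by intro h0; rw [h0] at h; simp at h
  rw [Complex.inv_def, Complex.normSq_eq_norm_sq, h]
  simp

variable {φ : ℂ → ℂ}

lemma cont_aux (hφ : IsInner φ) {r : ℝ} (h0 : 0 ≤ r) (h1 : r < 1) :
    Continuous (fun ζ : ℂ => φ ((r / max 1 ‖ζ‖) • ζ)) ∧
    ∀ ζ : ℂ, ‖ζ‖ = 1 → φ ((r / max 1 ‖ζ‖) • ζ) = φ (r • ζ) := by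
  constructor
  · have hc : Continuous fun ζ : ℂ => (r / max 1 ‖ζ‖) • ζ := by
      refine Continuous.smul (f := fun ζ : ℂ => r / max 1 ‖ζ‖) ?_ continuous_id
      exact continuous_const.div (continuous_const.max continuous_norm)
        (fun ζ => by positivity)
    refine (hφ.1.continuousOn).comp_continuous hc fun ζ => ?_
    rw [mem_ball_zero_iff]
    have hle : ‖(r / max 1 ‖ζ‖) • ζ‖ ≤ r := by
      rw [norm_smul, Real.norm_eq_abs, _root_.abs_of_nonneg (show (0:ℝ) ≤ r / max 1 ‖ζ‖ by positivity)]
      rw [div_mul_eq_mul_div, div_le_iff₀ (by positivity)]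
      exact mul_le_mul_of_nonneg_left (le_max_right _ _) h0
    exact lt_of_le_of_lt hle h1
  · intro ζ hζ
    rw [hζ, max_self, div_one]

lemma aesm_r (hφ : IsInner φ) {r : ℝ} (h0 : 0 ≤ r) (h1 : r < 1) :
    AEStronglyMeasurable (fun ζ => φ (r • ζ)) circleHaar :=
  (cont_aux hφ h0 h1).1.aestronglyMeasurable.congr
    (ae_norm_one.mono fun ζ hζ => (cont_aux hφ h0 h1).2 ζ hζ)

lemma aesm_phi (hφ : IsInner φ)
    (hbdry : ∀ᵐ ζ ∂circleHaar,
      Tendsto (fun r : ℝ => φ (r • ζ)) (𝓝[<] 1) (𝓝 (φ ζ)) ∧ ‖φ ζ‖ = 1) :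
    AEStronglyMeasurable φ circleHaar := by
  have hr0 : ∀ k : ℕ, 0 ≤ 1 - ((k:ℝ)+1)⁻¹ := by
    intro k
    have h1 : ((k:ℝ)+1)⁻¹ ≤ 1 := by
      rw [inv_le_one₀ (by positivity)]
      simp
    linarith
  have hr1 : ∀ k : ℕ, 1 - ((k:ℝ)+1)⁻¹ < 1 := by
    intro k
    have : (0:ℝ) < ((k:ℝ)+1)⁻¹ := by positivity
    linarith
  have hrt : Tendsto (fun k : ℕ => 1 - ((k:ℝ)+1)⁻¹) atTop (𝓝[<] (1:ℝ)) := by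
    apply tendsto_nhdsWithin_of_tendsto_nhds_of_eventually_within
    · have h := tendsto_one_div_add_atTop_nhds_zero_nat (𝕜 := ℝ)
      have h2 : Tendsto (fun k : ℕ => 1 - ((k:ℝ)+1)⁻¹) atTop (𝓝 (1 - 0)) := by
        refine Tendsto.sub tendsto_const_nhds ?_
        simpa [one_div] using h
      simpa using h2
    · exact Eventually.of_forall fun k => hr1 k
  refine aestronglyMeasurable_of_tendsto_ae atTop
    (fun k => (cont_aux hφ (hr0 k) (hr1 k)).1.aestronglyMeasurable) ?_
  filter_upwards [ae_norm_one, hbdry] with ζ hζ hb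
  have h1 := hb.1.comp hrt
  exact h1.congr fun k => ((cont_aux hφ (hr0 k) (hr1 k)).2 ζ hζ).symm

end ProjAux

namespace ProjAux

variable {u : ℕ → ℂ}

lemma coeff_r (hφ : IsInner φ)
    (htaylor : ∀ z ∈ ball (0:ℂ) 1,
      HasSum (fun n : ℕ => -conj (u (n + 1)) * z ^ (n + 1)) (φ z))
    (m : ℤ) {r : ℝ} (h0 : 0 ≤ r) (h1 : r < 1) :
    ∫ ζ, conj (φ (r • ζ)) * ζ ^ m ∂circleHaar
      = if 1 ≤ m then -u m.toNat * (r:ℂ) ^ m.toNat else 0 := by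
  have hrball : (r:ℂ) ∈ ball (0:ℂ) 1 := by
    rw [mem_ball_zero_iff, Complex.norm_real, Real.norm_eq_abs, _root_.abs_of_nonneg h0]
    exact h1
  have hsum : Summable (fun k : ℕ => ‖u (k+1)‖ * r ^ (k+1)) := by
    have h := summable_norm_iff.mpr (htaylor _ hrball).summable
    refine h.congr fun k => ?_
    rw [norm_mul, norm_neg, RCLike.norm_conj, norm_pow, Complex.norm_real,
        Real.norm_eq_abs, _root_.abs_of_nonneg h0]
  set F : ℕ → ℂ → ℂ := fun k ζ => (-(u (k+1)) * (r:ℂ)^(k+1)) * ζ^(m - (k+1:ℕ)) with hF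
  have hFme : ∀ k, AEStronglyMeasurable (F k) circleHaar := fun k =>
    ((measurable_zpowC _).const_mul _).aestronglyMeasurable
  have hFnorm : ∀ k, ∀ᵐ ζ ∂circleHaar, ‖F k ζ‖ = ‖u (k+1)‖ * r^(k+1) := by
    intro k
    filter_upwards [ae_norm_one] with ζ hζ
    rw [hF]
    simp only [norm_mul, norm_neg, norm_zpow, hζ, one_zpow, mul_one, norm_pow,
      Complex.norm_real, Real.norm_eq_abs, _root_.abs_of_nonneg h0]
  have hFint : ∀ k, Integrable (F k) circleHaar := fun k =>
    integrable_bdd (hFme k) ((hFnorm k).mono fun ζ h => le_of_eq h)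
  have hFnint : ∀ k, ∫ ζ, ‖F k ζ‖ ∂circleHaar = ‖u (k+1)‖ * r^(k+1) := by
    intro k
    rw [integral_congr_ae (hFnorm k), integral_const, probReal_univ]
    simp
  have hHS := hasSum_integral_of_summable_integral_norm (μ := circleHaar) hFint
    (hsum.congr fun k => (hFnint k).symm)
  have key : (fun ζ => conj (φ (r • ζ)) * ζ ^ m) =ᵐ[circleHaar]
      fun ζ => ∑' k, F k ζ := by
    filter_upwards [ae_norm_one] with ζ hζ
    have hζ0 : ζ ≠ 0 := by intro h0'; rw [h0'] at hζ; simp at hζ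
    have hball : r • ζ ∈ ball (0:ℂ) 1 := by
      rw [mem_ball_zero_iff, norm_smul, Real.norm_eq_abs, _root_.abs_of_nonneg h0, hζ, mul_one]
      exact h1
    have hs := ((htaylor _ hball).star.mul_right (ζ ^ m))
    have hterm : ∀ k : ℕ,
        star (-conj (u (k+1)) * (r • ζ : ℂ)^(k+1)) * ζ^m = F k ζ := by
      intro k
      have h2 : ((starRingEnd ℂ) ζ)^(k+1) = ζ ^ (-((k+1:ℕ):ℤ)) := by
        rw [conj_eq_inv hζ, zpow_neg, zpow_natCast, inv_pow]
      have h4 : ζ ^ (m - (k+1:ℕ)) = ζ ^ m * ζ ^ (-((k+1:ℕ):ℤ)) := by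
        rw [← zpow_add₀ hζ0, sub_eq_add_neg]
      have hstar : star (-conj (u (k+1)) * (r • ζ : ℂ)^(k+1))
          = -(u (k+1)) * ((r:ℂ)^(k+1) * ((starRingEnd ℂ) ζ)^(k+1)) := by
        rw [Complex.real_smul, star_mul', star_neg, mul_pow, star_mul']
        simp only [← starRingEnd_apply, Complex.conj_conj, Complex.conj_ofReal,
          map_pow]
        try ring
      rw [hstar, h2, hF]
      simp only []
      rw [h4]
      ring
    have hs' : HasSum (fun k => F k ζ) ((starRingEnd ℂ) (φ (r • ζ)) * ζ ^ m) := by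
      have h := hs
      rw [funext hterm] at h
      exact h
    exact hs'.tsum_eq.symm
  rw [integral_congr_ae key, ← hHS.tsum_eq]
  have hint : ∀ k : ℕ, ∫ ζ, F k ζ ∂circleHaar
      = if m = (k+1:ℕ) then -(u (k+1)) * (r:ℂ)^(k+1) else 0 := by
    intro k
    rw [hF]
    simp only []
    rw [MeasureTheory.integral_const_mul, integral_zpow]
    by_cases h : m = ((k+1:ℕ):ℤ)
    · rw [if_pos (by omega), if_pos (by exact_mod_cast h), mul_one]
    · rw [if_neg (by omega), if_neg (by exact_mod_cast h), mul_zero]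
  by_cases hm : 1 ≤ m
  · rw [if_pos hm]
    obtain ⟨k0, hk0⟩ : ∃ k0 : ℕ, m = ((k0+1:ℕ):ℤ) := ⟨m.toNat - 1, by omega⟩
    have htn : m.toNat = k0 + 1 := by omega
    rw [tsum_eq_single k0 (fun b hb => by
      rw [hint, if_neg (show ¬m = ((b+1:ℕ):ℤ) by omega)]),
      hint, if_pos hk0, htn]
  · rw [if_neg hm]
    have hz : ∀ k : ℕ, ∫ ζ, F k ζ ∂circleHaar = 0 := fun k => by
      rw [hint, if_neg (show ¬m = ((k+1:ℕ):ℤ) by omega)]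
    rw [tsum_congr hz, tsum_zero]

end ProjAux

namespace ProjAux

variable {φ : ℂ → ℂ} {u : ℕ → ℂ}

lemma coeff (hφ : IsInner φ)
    (htaylor : ∀ z ∈ ball (0:ℂ) 1,
      HasSum (fun n : ℕ => -conj (u (n + 1)) * z ^ (n + 1)) (φ z))
    (hbdry : ∀ᵐ ζ ∂circleHaar,
      Tendsto (fun r : ℝ => φ (r • ζ)) (𝓝[<] 1) (𝓝 (φ ζ)) ∧ ‖φ ζ‖ = 1)
    (m : ℤ) :
    ∫ ζ, conj (φ ζ) * ζ ^ m ∂circleHaar = if 1 ≤ m then -u m.toNat else 0 := by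
  have hmem : Ioo (0:ℝ) 1 ∈ 𝓝[<] (1:ℝ) :=
    Ioo_mem_nhdsLT_of_mem (by constructor <;> norm_num)
  have htend : Tendsto (fun r : ℝ => ∫ ζ, conj (φ (r • ζ)) * ζ ^ m ∂circleHaar)
      (𝓝[<] (1:ℝ)) (𝓝 (∫ ζ, conj (φ ζ) * ζ ^ m ∂circleHaar)) := by
    refine tendsto_integral_filter_of_dominated_convergence (bound := fun _ => 1)
      ?_ ?_ (integrable_const 1) ?_
    · filter_upwards [hmem] with r hr
      exact (Complex.continuous_conj.comp_aestronglyMeasurable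
        (aesm_r hφ hr.1.le hr.2)).mul (measurable_zpowC m).aestronglyMeasurable
    · filter_upwards [hmem] with r hr
      filter_upwards [ae_norm_one] with ζ hζ
      have hball : r • ζ ∈ ball (0:ℂ) 1 := by
        rw [mem_ball_zero_iff, norm_smul, Real.norm_eq_abs,
          _root_.abs_of_nonneg hr.1.le, hζ, mul_one]
        exact hr.2
      have := mem_ball_zero_iff.mp (hφ.2.1 hball)
      rw [norm_mul, norm_zpow, hζ, one_zpow, mul_one, RCLike.norm_conj]
      exact this.le
    · filter_upwards [hbdry] with ζ hb
      have h1 : Tendsto (fun r : ℝ => conj (φ (r • ζ))) (𝓝[<] (1:ℝ))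
          (𝓝 (conj (φ ζ))) :=
        ((Complex.continuous_conj.tendsto _).comp hb.1)
      exact h1.mul_const _
  have heq : (fun r : ℝ => ∫ ζ, conj (φ (r • ζ)) * ζ ^ m ∂circleHaar)
      =ᶠ[𝓝[<] (1:ℝ)] fun r => if 1 ≤ m then -u m.toNat * (r:ℂ)^m.toNat else 0 := by
    filter_upwards [hmem] with r hr
    exact coeff_r hφ htaylor m hr.1.le hr.2
  have htend2 : Tendsto (fun r : ℝ => if 1 ≤ m then -u m.toNat * (r:ℂ)^m.toNat else 0)
      (𝓝[<] (1:ℝ)) (𝓝 (if 1 ≤ m then -u m.toNat else 0)) := by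
    split_ifs
    · have hc : Continuous fun r : ℝ => -u m.toNat * (r:ℂ)^m.toNat := by
        continuity
      have := (hc.tendsto 1).mono_left (nhdsWithin_le_nhds (s := Iio (1:ℝ)))
      simpa using this
    · exact tendsto_const_nhds
  exact tendsto_nhds_unique (htend.congr' heq) htend2

end ProjAux

/-- let `φ` be inner with `φ(0) = 0` and Taylor series
`φ(z) = Σ_{n≥1} (-conj(u_n)) zⁿ`, whose boundary values on the circle are given
(radially a.e.) by `φ` itself.  Then the orthogonal projection of `zⁿ` onto the
model space `H(φ)`, given by the integral formula
`(P_φ f)(w) = ∫_𝕋 f(ζ)(1 - φ(w)conj(φ(ζ)))/(1 - w conj(ζ)) dm(ζ)`, equals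
`wⁿ + φ(w) Σ_{k=0}^{n-1} u_{n-k} w^k`. -/

theorem projection_of_monomials
    (φ : ℂ → ℂ) (hφ : IsInner φ) (hφ0 : φ 0 = 0)
    (u : ℕ → ℂ)
    (htaylor : ∀ z ∈ ball (0:ℂ) 1,
      HasSum (fun n : ℕ => -conj (u (n + 1)) * z ^ (n + 1)) (φ z))
    (hbdry : ∀ᵐ ζ ∂circleHaar,
      Tendsto (fun r : ℝ => φ (r • ζ)) (𝓝[<] 1) (𝓝 (φ ζ)) ∧ ‖φ ζ‖ = 1) :
    ∀ n : ℕ, ∀ w ∈ ball (0:ℂ) 1,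
      (∫ ζ, ζ ^ n * (1 - φ w * conj (φ ζ)) / (1 - w * conj ζ) ∂circleHaar) =
        w ^ n + φ w * ∑ k ∈ Finset.range n, u (n - k) * w ^ k := by
  intro n w hw
  have hw1 : ‖w‖ < 1 := mem_ball_zero_iff.mp hw
  set F : ℕ → ℂ → ℂ :=
    fun j ζ => w ^ j * ((1 - φ w * conj (φ ζ)) * ζ ^ ((n:ℤ) - j)) with hF
  have haephi := ProjAux.aesm_phi hφ hbdry
  have hbd : ∀ᵐ ζ ∂circleHaar, ‖φ ζ‖ = 1 := hbdry.mono fun ζ h => h.2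
  have hG : AEStronglyMeasurable (fun ζ => 1 - φ w * conj (φ ζ)) circleHaar :=
    aestronglyMeasurable_const.sub (aestronglyMeasurable_const.mul
      (Complex.continuous_conj.comp_aestronglyMeasurable haephi))
  have hFmeas : ∀ j, AEStronglyMeasurable (F j) circleHaar := fun j =>
    ((hG.mul (ProjAux.measurable_zpowC _).aestronglyMeasurable).const_mul _)
  have hFbound : ∀ j, ∀ᵐ ζ ∂circleHaar, ‖F j ζ‖ ≤ (1 + ‖φ w‖) * ‖w‖^j := by
    intro j
    filter_upwards [ProjAux.ae_norm_one, hbd] with ζ hζ hφζ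
    rw [hF]
    simp only [norm_mul, norm_pow, norm_zpow, hζ, one_zpow, mul_one]
    have h2 : ‖(1:ℂ) - φ w * conj (φ ζ)‖ ≤ 1 + ‖φ w‖ := by
      refine (norm_sub_le _ _).trans ?_
      rw [norm_one, norm_mul, RCLike.norm_conj, hφζ, mul_one]
    calc ‖w‖^j * ‖1 - φ w * conj (φ ζ)‖ ≤ ‖w‖^j * (1 + ‖φ w‖) :=
          mul_le_mul_of_nonneg_left h2 (by positivity)
      _ = (1 + ‖φ w‖) * ‖w‖^j := by ring
  have hFint : ∀ j, Integrable (F j) circleHaar := fun j =>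
    ProjAux.integrable_bdd (hFmeas j) (hFbound j)
  have hFsum : Summable fun j => ∫ ζ, ‖F j ζ‖ ∂circleHaar := by
    refine Summable.of_nonneg_of_le
      (fun j => integral_nonneg fun ζ => norm_nonneg _) (fun j => ?_)
      (((summable_geometric_of_norm_lt_one (by rwa [Real.norm_eq_abs,
          _root_.abs_of_nonneg (norm_nonneg w)])).mul_left (1 + ‖φ w‖)))
    calc ∫ ζ, ‖F j ζ‖ ∂circleHaar ≤ ∫ _ζ, (1 + ‖φ w‖) * ‖w‖^j ∂circleHaar :=
          integral_mono_ae (hFint j).norm (integrable_const _) (hFbound j)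
      _ = (1 + ‖φ w‖) * ‖w‖^j := by rw [integral_const, probReal_univ]; simp
  have hHS := hasSum_integral_of_summable_integral_norm (μ := circleHaar) hFint hFsum
  have key : (fun ζ : ℂ => ζ ^ n * (1 - φ w * conj (φ ζ)) / (1 - w * conj ζ))
      =ᵐ[circleHaar] fun ζ => ∑' j, F j ζ := by
    filter_upwards [ProjAux.ae_norm_one] with ζ hζ
    have hζ0 : ζ ≠ 0 := by intro h0; rw [h0] at hζ; simp at hζ
    have hnorm : ‖w * conj ζ‖ < 1 := by
      rw [norm_mul, RCLike.norm_conj, hζ, mul_one]; exact hw1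
    have hgeo := (hasSum_geometric_of_norm_lt_one hnorm).mul_left
      (ζ ^ n * (1 - φ w * conj (φ ζ)))
    have hterm : ∀ j : ℕ,
        (ζ ^ n * (1 - φ w * conj (φ ζ))) * (w * conj ζ)^j = F j ζ := by
      intro j
      have h2 : (conj ζ : ℂ)^j = ζ ^ (-(j:ℤ)) := by
        rw [ProjAux.conj_eq_inv hζ, zpow_neg, zpow_natCast, inv_pow]
      have h3 : (ζ:ℂ) ^ n = ζ ^ (n:ℤ) := (zpow_natCast ζ n).symm
      have h4 : ζ ^ ((n:ℤ) - j) = ζ ^ (n:ℤ) * ζ ^ (-(j:ℤ)) := by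
        rw [← zpow_add₀ hζ0, sub_eq_add_neg]
      rw [hF]
      simp only []
      rw [mul_pow, h2, h3, h4]
      ring
    have hs' : HasSum (fun j => F j ζ)
        ((ζ ^ n * (1 - φ w * conj (φ ζ))) * (1 - w * conj ζ)⁻¹) := by
      have h := hgeo
      rw [funext hterm] at h
      exact h
    rw [div_eq_mul_inv]
    exact hs'.tsum_eq.symm
  rw [integral_congr_ae key, ← hHS.tsum_eq]
  have hintF : ∀ j : ℕ, ∫ ζ, F j ζ ∂circleHaar =
      (if j = n then w^n else 0) + (if j < n then φ w * u (n - j) * w^j else 0) := by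
    intro j
    rw [hF]
    simp only []
    rw [MeasureTheory.integral_const_mul]
    have hsplit : ∀ ζ : ℂ, (1 - φ w * conj (φ ζ)) * ζ ^ ((n:ℤ) - j)
        = ζ ^ ((n:ℤ) - j) - φ w * (conj (φ ζ) * ζ ^ ((n:ℤ) - j)) := by
      intro ζ; ring
    rw [integral_congr_ae (ae_of_all _ hsplit)]
    have hint1 : Integrable (fun ζ : ℂ => ζ ^ ((n:ℤ) - j)) circleHaar :=
      ProjAux.integrable_bdd (ProjAux.measurable_zpowC _).aestronglyMeasurable
        (ProjAux.ae_norm_one.mono fun ζ hζ => by rw [norm_zpow, hζ, one_zpow])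
    have hint2 : Integrable (fun ζ : ℂ => φ w * (conj (φ ζ) * ζ ^ ((n:ℤ) - j)))
        circleHaar := by
      refine ProjAux.integrable_bdd (C := ‖φ w‖) (((Complex.continuous_conj.comp_aestronglyMeasurable
        haephi).mul (ProjAux.measurable_zpowC _).aestronglyMeasurable).const_mul _) ?_
      filter_upwards [ProjAux.ae_norm_one, hbd] with ζ hζ hφζ
      rw [norm_mul, norm_mul, RCLike.norm_conj, hφζ, norm_zpow, hζ, one_zpow]
      simp
    rw [integral_sub hint1 hint2, ProjAux.integral_zpow, MeasureTheory.integral_const_mul,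
      ProjAux.coeff hφ htaylor hbdry]
    rcases lt_trichotomy j n with h | h | h
    · rw [if_neg (show ¬(n:ℤ) - j = 0 by omega), if_pos (show 1 ≤ (n:ℤ) - j by omega),
        if_neg (by omega), if_pos h]
      have : ((n:ℤ) - j).toNat = n - j := by omega
      rw [this]
      ring
    · subst h
      rw [if_pos (by omega), if_neg (by omega), if_pos rfl, if_neg (by omega)]
      simp [zpow_natCast]
    · rw [if_neg (by omega), if_neg (by omega), if_neg (by omega), if_neg (by omega)]
      ring
  rw [tsum_congr hintF,
    Summable.tsum_add (summable_of_ne_finset_zero (s := {n}) (fun j hj => by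
        rw [if_neg (by simpa using hj)]))
      (summable_of_ne_finset_zero (s := Finset.range n) (fun j hj => by
        rw [if_neg (by simpa using hj)])),
    tsum_ite_eq, tsum_eq_sum (s := Finset.range n) (fun j hj => by
        rw [if_neg (by simpa using hj)])]
  congr 1
  rw [Finset.mul_sum]
  refine Finset.sum_congr rfl fun j hj => ?_
  rw [if_pos (Finset.mem_range.mp hj)]
  ring
end
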